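/- arXiv:2002.08724 — 4 statements merged into one kernel-verified Lean document; each statement's English description precedes it below -/
import Mathlib

section
/- Let H be a complex Hilbert space, let G be a nonzero finite-dimensional subspace of H and let F be a closed subspace of H such that cos∠(G,F) > 0. Then for every f ∈ H there exists a unique element f̃ ∈ G satisfying the consistency condition Q_G(Q_F f̃) = Q_G(Q_F f), and this f̃ satisfies the sharp bound ‖f̃ − f‖ ≤ (1 / cos∠(G,F)) · ‖f − Q_G f‖. -/
/-- `cos∠(A,B) := inf{‖Q_B a‖ : a ∈ A, ‖a‖ = 1}`. -/
noncomputable def cosAngle {H : Type*} [NormedAddCommGroup H] [InnerProductSpace ℂ H]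
    (A B : Submodule ℂ H) [CompleteSpace B] : ℝ :=
  sInf ((fun a => ‖(Submodule.orthogonalProjectionOnto B a : H)‖) '' {a : H | a ∈ A ∧ ‖a‖ = 1})

/-!
Write `c = cos∠(G,F)` and `z = f̃ - f`. Consistency says exactly that `Q_F z ⊥ G`, so with
`g = Q_G z` we get `⟪z, Q_F g⟫ = ⟪Q_F z, g⟫ = 0`, hence
`‖g‖² = ⟪z, g⟫ = ⟪z, g - Q_F g⟫ ≤ ‖z‖ ‖g - Q_F g‖ ≤ ‖z‖ √(1 - c²) ‖g‖`,
because `‖Q_F g‖ ≥ c ‖g‖`. Thus `‖Q_G z‖² ≤ (1 - c²) ‖z‖²`, i.e. `c ‖z‖ ≤ ‖z - Q_G z‖`, and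
`z - Q_G z = Q_G f - f` since `f̃ ∈ G`. Applied to two consistent elements of `G` the same bound
gives uniqueness, so `g ↦ Q_G (Q_F g)` is injective on the finite-dimensional space `G`, hence
onto, which gives existence.
-/

open Submodule RCLike InnerProductSpace

section

variable {H : Type*} [NormedAddCommGroup H] [InnerProductSpace ℂ H]

section CosAngle

variable (A B : Submodule ℂ H) [CompleteSpace B]

lemma cosAngle_nonneg : 0 ≤ cosAngle A B :=
  Real.sInf_nonneg (by rintro _ ⟨a, -, rfl⟩; exact norm_nonneg _)

variable {A} in
lemma cosAngle_le_norm_starProjection {a : H} (ha : a ∈ A) (hna : ‖a‖ = 1) :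
    cosAngle A B ≤ ‖B.starProjection a‖ :=
  csInf_le ⟨0, by rintro _ ⟨b, -, rfl⟩; exact norm_nonneg _⟩ ⟨a, ⟨ha, hna⟩, rfl⟩

lemma cosAngle_le_one : cosAngle A B ≤ 1 := by
  rcases Set.eq_empty_or_nonempty {a : H | a ∈ A ∧ ‖a‖ = 1} with h | ⟨a, ha, hna⟩
  · simp [cosAngle, h]
  · calc cosAngle A B ≤ ‖B.starProjection a‖ := cosAngle_le_norm_starProjection B ha hna
      _ ≤ 1 := hna ▸ B.norm_starProjection_apply_le a

variable {A} in
lemma cosAngle_mul_norm_le {a : H} (ha : a ∈ A) :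
    cosAngle A B * ‖a‖ ≤ ‖B.starProjection a‖ := by
  rcases eq_or_ne a 0 with rfl | ha0
  · simp
  have hunit : ‖(‖a‖⁻¹ : ℂ) • a‖ = 1 := by simp [norm_smul, ha0]
  have h := cosAngle_le_norm_starProjection B (A.smul_mem _ ha) hunit
  rw [map_smul, norm_smul, norm_inv, Complex.norm_real, norm_norm,
    le_inv_mul_iff₀ (norm_pos_iff.2 ha0)] at h
  rwa [mul_comm]

end CosAngle

section Consistency

variable (G F : Submodule ℂ H) [G.HasOrthogonalProjection] [CompleteSpace F]

lemma norm_sq_starProjection_le_of_starProjection_mem_orthogonal {z : H}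
    (hz : F.starProjection z ∈ Gᗮ) :
    ‖G.starProjection z‖ ^ 2 ≤ (1 - cosAngle G F ^ 2) * ‖z‖ ^ 2 := by
  set c := cosAngle G F
  set g := G.starProjection z
  have hgG : g ∈ G := G.starProjection_apply_mem z
  have hzg : re ⟪z, g⟫_ℂ = ‖g‖ ^ 2 := by
    rw [← inner_conj_symm, conj_re]
    exact G.re_inner_starProjection_eq_normSq z
  have hzQg : ⟪z, F.starProjection g⟫_ℂ = 0 := by
    rw [← F.inner_starProjection_left_eq_right]
    exact inner_left_of_mem_orthogonal hgG hz
  have hpyth : ‖g‖ ^ 2 = ‖F.starProjection g‖ ^ 2 + ‖g - F.starProjection g‖ ^ 2 := by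
    simpa [starProjection_orthogonal_val] using F.norm_sq_eq_add_norm_sq_starProjection g
  have hcg : c * ‖g‖ ≤ ‖F.starProjection g‖ := cosAngle_mul_norm_le F hgG
  have hQg : c ^ 2 * ‖g‖ ^ 2 ≤ ‖F.starProjection g‖ ^ 2 := by
    simpa only [mul_pow] using pow_le_pow_left₀ (by positivity [cosAngle_nonneg G F]) hcg 2
  have hCS : ‖g‖ ^ 2 ≤ ‖z‖ * ‖g - F.starProjection g‖ :=
    calc ‖g‖ ^ 2 = re ⟪z, g - F.starProjection g⟫_ℂ := by
          rw [inner_sub_right, hzQg, sub_zero, hzg]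
      _ ≤ ‖z‖ * ‖g - F.starProjection g‖ := re_inner_le_norm _ _
  have hsq : ‖g‖ ^ 2 * ‖g‖ ^ 2 ≤ ‖g‖ ^ 2 * ((1 - c ^ 2) * ‖z‖ ^ 2) :=
    calc ‖g‖ ^ 2 * ‖g‖ ^ 2 ≤ (‖z‖ * ‖g - F.starProjection g‖) ^ 2 := by
          rw [← sq]; exact pow_le_pow_left₀ (by positivity) hCS 2
      _ = ‖z‖ ^ 2 * (‖g‖ ^ 2 - ‖F.starProjection g‖ ^ 2) := by rw [hpyth]; ring
      _ ≤ ‖z‖ ^ 2 * (‖g‖ ^ 2 - c ^ 2 * ‖g‖ ^ 2) := by gcongr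
      _ = ‖g‖ ^ 2 * ((1 - c ^ 2) * ‖z‖ ^ 2) := by ring
  rcases eq_or_lt_of_le (sq_nonneg ‖g‖) with hg | hg
  · have hc1 : c ^ 2 ≤ 1 := pow_le_one₀ (cosAngle_nonneg G F) (cosAngle_le_one G F)
    rw [← hg]
    exact mul_nonneg (sub_nonneg.2 hc1) (sq_nonneg _)
  · exact le_of_mul_le_mul_left hsq hg

lemma cosAngle_mul_norm_le_norm_sub_starProjection {z : H} (hz : F.starProjection z ∈ Gᗮ) :
    cosAngle G F * ‖z‖ ≤ ‖z - G.starProjection z‖ := by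
  have hpyth : ‖z‖ ^ 2 = ‖G.starProjection z‖ ^ 2 + ‖z - G.starProjection z‖ ^ 2 := by
    simpa [starProjection_orthogonal_val] using G.norm_sq_eq_add_norm_sq_starProjection z
  have := norm_sq_starProjection_le_of_starProjection_mem_orthogonal G F hz
  rw [← pow_le_pow_iff_left₀ (by positivity [cosAngle_nonneg G F]) (norm_nonneg _) two_ne_zero,
    mul_pow]
  linarith

variable {G F} in
lemma cosAngle_mul_norm_sub_le {f f' : H} (hf' : f' ∈ G)
    (hcons : G.orthogonalProjectionOnto (F.starProjection f') =
      G.orthogonalProjectionOnto (F.starProjection f)) :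
    cosAngle G F * ‖f' - f‖ ≤ ‖f - G.starProjection f‖ := by
  have hz : F.starProjection (f' - f) ∈ Gᗮ := by
    rw [← orthogonalProjectionOnto_eq_zero_iff, map_sub, map_sub, hcons, sub_self]
  have hres : f' - f - G.starProjection (f' - f) = -(f - G.starProjection f) := by
    rw [map_sub, starProjection_eq_self_iff.2 hf']
    abel
  simpa only [hres, norm_neg] using cosAngle_mul_norm_le_norm_sub_starProjection G F hz

variable {G F} in
lemma eq_of_orthogonalProjectionOnto_starProjection_eq (hcos : 0 < cosAngle G F) {f₁ f₂ : H}
    (hf₁ : f₁ ∈ G) (hf₂ : f₂ ∈ G)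
    (hcons : G.orthogonalProjectionOnto (F.starProjection f₁) =
      G.orthogonalProjectionOnto (F.starProjection f₂)) :
    f₁ = f₂ := by
  have h := cosAngle_mul_norm_sub_le hf₁ hcons
  rw [starProjection_eq_self_iff.2 hf₂, sub_self, norm_zero] at h
  exact sub_eq_zero.1 (norm_le_zero_iff.1 (nonpos_of_mul_nonpos_right h hcos))

variable {G F} in
lemma exists_mem_orthogonalProjectionOnto_starProjection_eq [FiniteDimensional ℂ G]
    (hcos : 0 < cosAngle G F) (f : H) :
    ∃ f' ∈ G, G.orthogonalProjectionOnto (F.starProjection f') =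
      G.orthogonalProjectionOnto (F.starProjection f) := by
  let T : G →ₗ[ℂ] G := (G.orthogonalProjectionOnto ∘L F.starProjection ∘L G.subtypeL).toLinearMap
  have hT : Function.Injective T := fun a b hab =>
    Subtype.ext (eq_of_orthogonalProjectionOnto_starProjection_eq hcos a.2 b.2 hab)
  obtain ⟨g, hg⟩ := LinearMap.injective_iff_surjective.1 hT (G.orthogonalProjectionOnto
    (F.starProjection f))
  exact ⟨g, g.2, hg⟩

end Consistency

end

theorem stmt_0_general {H : Type*} [NormedAddCommGroup H] [InnerProductSpace ℂ H]
    (G F : Submodule ℂ H) [FiniteDimensional ℂ G] [CompleteSpace F]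
    (hcos : 0 < cosAngle G F) (f : H) :
    (∃! ftilde : H, ftilde ∈ G ∧
        Submodule.orthogonalProjectionOnto G ((Submodule.orthogonalProjectionOnto F ftilde : H)) =
          Submodule.orthogonalProjectionOnto G ((Submodule.orthogonalProjectionOnto F f : H))) ∧
    (∀ ftilde : H, ftilde ∈ G →
        Submodule.orthogonalProjectionOnto G ((Submodule.orthogonalProjectionOnto F ftilde : H)) =
          Submodule.orthogonalProjectionOnto G ((Submodule.orthogonalProjectionOnto F f : H)) →
        ‖ftilde - f‖ ≤ (1 / cosAngle G F) * ‖f - (Submodule.orthogonalProjectionOnto G f : H)‖) := by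
  obtain ⟨f', hf'G, hf'⟩ := exists_mem_orthogonalProjectionOnto_starProjection_eq hcos f
  refine ⟨⟨f', ⟨hf'G, hf'⟩, fun g ⟨hgG, hg⟩ =>
    eq_of_orthogonalProjectionOnto_starProjection_eq hcos hgG hf'G (hg.trans hf'.symm)⟩, ?_⟩
  intro ftilde hftilde hcons
  rw [one_div_mul_eq_div, le_div_iff₀ hcos, mul_comm]
  exact cosAngle_mul_norm_sub_le hftilde hcons

/-- the generalized sampling reconstruction exists, is unique and satisfies the
sharp error bound. -/
theorem stmt_0 {H : Type*} [NormedAddCommGroup H] [InnerProductSpace ℂ H] [CompleteSpace H]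
    (G F : Submodule ℂ H) [FiniteDimensional ℂ G] [CompleteSpace F]
    (hG : G ≠ ⊥) (hcos : 0 < cosAngle G F) (f : H) :
    (∃! ftilde : H, ftilde ∈ G ∧
        Submodule.orthogonalProjectionOnto G ((Submodule.orthogonalProjectionOnto F ftilde : H)) =
          Submodule.orthogonalProjectionOnto G ((Submodule.orthogonalProjectionOnto F f : H))) ∧
    (∀ ftilde : H, ftilde ∈ G →
        Submodule.orthogonalProjectionOnto G ((Submodule.orthogonalProjectionOnto F ftilde : H)) =
          Submodule.orthogonalProjectionOnto G ((Submodule.orthogonalProjectionOnto F f : H)) →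
        ‖ftilde - f‖ ≤ (1 / cosAngle G F) * ‖f - (Submodule.orthogonalProjectionOnto G f : H)‖) :=
  stmt_0_general G F hcos f
end

section
/- Let {ψ_k}_{k=1}^q and {φ_ℓ}_{ℓ=1}^p be orthonormal families in a complex Hilbert space H, let F := span{ψ_1,…,ψ_q} and G := span{φ_1,…,φ_p}, let A ∈ ℂ^{q×p} be the matrix with entries A_{kℓ} = ⟨φ_ℓ, ψ_k⟩, and let f ∈ H with b ∈ ℂ^q given by b_k = ⟨f, ψ_k⟩. Then a vector a ∈ ℂ^p minimizes ‖A a − b‖₂ over ℂ^p if and only if the function f̃ := Σ_{ℓ=1}^p a_ℓ φ_ℓ satisfies Q_G(Q_F f̃) = Q_G(Q_F f). -/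
/-!
Since `(A a' - b)_k = ⟪ψ k, f̃' - f⟫` and `ψ` is an orthonormal basis of `F`, the residual
`‖A a' - b‖₂` equals `‖Q_F (f̃' - f)‖`. Hence `a` solves the least-squares problem iff `Q_F f̃` is a
point of `Q_F(G)` nearest to `Q_F f`, i.e. iff `Q_F f - Q_F f̃ ⊥ Q_F(G)`. As `Q_F` is self-adjoint
and idempotent, this is orthogonality of `Q_F f - Q_F f̃` to `G`, i.e. `Q_G (Q_F f̃) = Q_G (Q_F f)`.
-/

section

open Submodule
open scoped InnerProductSpace

variable {𝕜 E : Type*} [RCLike 𝕜] [NormedAddCommGroup E] [InnerProductSpace 𝕜 E]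

theorem Submodule.forall_norm_sub_le_iff_forall_inner_eq_zero (K : Submodule 𝕜 E) {u v : E}
    (hv : v ∈ K) : (∀ w ∈ K, ‖u - v‖ ≤ ‖u - w‖) ↔ ∀ w ∈ K, ⟪u - v, w⟫_𝕜 = 0 := by
  have hbdd : BddBelow (Set.range fun w : K => ‖u - w‖) :=
    ⟨0, by rintro _ ⟨w, rfl⟩; positivity⟩
  rw [← K.norm_eq_iInf_iff_inner_eq_zero hv]
  exact ⟨fun h => le_antisymm (le_ciInf fun w => h w w.2) (ciInf_le hbdd ⟨v, hv⟩),
    fun h w hw => h ▸ ciInf_le hbdd ⟨w, hw⟩⟩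

theorem Submodule.inner_starProjection_starProjection (K : Submodule 𝕜 E)
    [K.HasOrthogonalProjection] (u v : E) :
    ⟪K.starProjection u, K.starProjection v⟫_𝕜 = ⟪K.starProjection u, v⟫_𝕜 := by
  rw [inner_starProjection_left_eq_right,
    starProjection_eq_self_iff.mpr (K.starProjection_apply_mem v), inner_starProjection_left_eq_right]

theorem Submodule.forall_norm_starProjection_sub_le_iff (F G : Submodule 𝕜 E)
    [F.HasOrthogonalProjection] [G.HasOrthogonalProjection] {g x : E} (hg : g ∈ G) :
    (∀ g' ∈ G, ‖F.starProjection (g - x)‖ ≤ ‖F.starProjection (g' - x)‖) ↔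
      G.orthogonalProjectionOnto (F.starProjection g) =
        G.orthogonalProjectionOnto (F.starProjection x) := by
  set P := F.starProjection
  have hmin := (G.map (P : E →ₗ[𝕜] E)).forall_norm_sub_le_iff_forall_inner_eq_zero
    (u := P x) (mem_map_of_mem hg)
  simp only [mem_map, ContinuousLinearMap.coe_coe, forall_exists_index, and_imp,
    forall_apply_eq_imp_iff₂] at hmin
  have hnorm : ∀ y, ‖P (y - x)‖ = ‖P x - P y‖ := fun y => by rw [map_sub, norm_sub_rev]
  simp only [hnorm]
  rw [hmin, eq_comm, ← sub_eq_zero, ← map_sub G.orthogonalProjectionOnto, ← map_sub P,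
    orthogonalProjectionOnto_eq_zero_iff, mem_orthogonal']
  exact forall₂_congr fun _ _ => by rw [inner_starProjection_starProjection]

theorem Orthonormal.starProjection_span_apply {ι : Type*} [Fintype ι] {v : ι → E}
    (hv : Orthonormal 𝕜 v) [(span 𝕜 (Set.range v)).HasOrthogonalProjection] (x : E) :
    (span 𝕜 (Set.range v)).starProjection x = ∑ i, ⟪v i, x⟫_𝕜 • v i := by
  classical
  refine eq_starProjection_of_mem_of_inner_eq_zero
    (sum_mem fun i _ => smul_mem _ _ (subset_span (Set.mem_range_self i))) fun w hw => ?_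
  induction hw using span_induction with
  | mem w hw =>
    obtain ⟨j, rfl⟩ := hw
    rw [inner_sub_left, sub_eq_zero, hv.inner_left_fintype, inner_conj_symm]
  | zero => exact inner_zero_right _
  | add y z _ _ hy hz => rw [inner_add_right, hy, hz, add_zero]
  | smul c y _ hy => rw [inner_smul_right, hy, mul_zero]

theorem Orthonormal.norm_starProjection_span_sq {ι : Type*} [Fintype ι] {v : ι → E}
    (hv : Orthonormal 𝕜 v) [(span 𝕜 (Set.range v)).HasOrthogonalProjection] (x : E) :
    ‖(span 𝕜 (Set.range v)).starProjection x‖ ^ 2 = ∑ i, ‖⟪v i, x⟫_𝕜‖ ^ 2 := by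
  rw [← inner_self_eq_norm_sq (𝕜 := 𝕜), hv.starProjection_span_apply, hv.inner_sum, map_sum]
  refine Finset.sum_congr rfl fun i _ => ?_
  rw [RCLike.conj_mul, ← RCLike.ofReal_pow, RCLike.ofReal_re]

end

theorem stmt_1_general {H : Type*} [NormedAddCommGroup H] [InnerProductSpace ℂ H]
    {q p : ℕ} (ψ : Fin q → H) (φ : Fin p → H)
    (hψ : Orthonormal ℂ ψ)
    (F G : Submodule ℂ H) [CompleteSpace F] [CompleteSpace G]
    (hF : F = Submodule.span ℂ (Set.range ψ)) (hG : G = Submodule.span ℂ (Set.range φ))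
    (A : Matrix (Fin q) (Fin p) ℂ) (hA : ∀ k l, A k l = inner ℂ (ψ k) (φ l))
    (f : H) (b : Fin q → ℂ) (hb : ∀ k, b k = inner ℂ (ψ k) f)
    (a : Fin p → ℂ) :
    (∀ a' : Fin p → ℂ,
        ∑ k, ‖A.mulVec a k - b k‖ ^ 2 ≤
          ∑ k, ‖A.mulVec a' k - b k‖ ^ 2) ↔
      Submodule.orthogonalProjection G ((Submodule.orthogonalProjection F (∑ l, a l • φ l) : H)) =
        Submodule.orthogonalProjection G ((Submodule.orthogonalProjection F f : H)) := by
  subst hF hG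
  have hresidual : ∀ a' : Fin p → ℂ, ∑ k, ‖A.mulVec a' k - b k‖ ^ 2 =
      ‖(Submodule.span ℂ (Set.range ψ)).starProjection (∑ l, a' l • φ l - f)‖ ^ 2 := by
    intro a'
    simp only [hψ.norm_starProjection_span_sq, inner_sub_right, inner_sum, inner_smul_right,
      Matrix.mulVec, dotProduct, hA, hb, mul_comm]
  simp only [hresidual, sq_le_sq₀ (norm_nonneg _) (norm_nonneg _), ← Submodule.starProjection_apply]
  rw [← Submodule.forall_norm_starProjection_sub_le_iff _ _
    ((Submodule.mem_span_range_iff_exists_fun ℂ).2 ⟨a, rfl⟩)]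
  simp only [Submodule.mem_span_range_iff_exists_fun, forall_exists_index, forall_apply_eq_imp_iff]

/-- equivalence between the least-squares formulation and the generalized
sampling consistency condition. -/
theorem stmt_1 {H : Type*} [NormedAddCommGroup H] [InnerProductSpace ℂ H] [CompleteSpace H]
    {q p : ℕ} (ψ : Fin q → H) (φ : Fin p → H)
    (hψ : Orthonormal ℂ ψ) (hφ : Orthonormal ℂ φ)
    (F G : Submodule ℂ H) [CompleteSpace F] [CompleteSpace G]
    (hF : F = Submodule.span ℂ (Set.range ψ)) (hG : G = Submodule.span ℂ (Set.range φ))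
    (A : Matrix (Fin q) (Fin p) ℂ) (hA : ∀ k l, A k l = inner ℂ (ψ k) (φ l))
    (f : H) (b : Fin q → ℂ) (hb : ∀ k, b k = inner ℂ (ψ k) f)
    (a : Fin p → ℂ) :
    (∀ a' : Fin p → ℂ,
        ∑ k, ‖A.mulVec a k - b k‖ ^ 2 ≤
          ∑ k, ‖A.mulVec a' k - b k‖ ^ 2) ↔
      Submodule.orthogonalProjection G ((Submodule.orthogonalProjection F (∑ l, a l • φ l) : H)) =
        Submodule.orthogonalProjection G ((Submodule.orthogonalProjection F f : H)) :=
  stmt_1_general ψ φ hψ F G hF hG A hA f b hb a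
end

section
/- For any complex matrix A ∈ ℂ^{q×p}, the minimal singular value of A equals the minimal singular value of the real block matrix B ∈ ℝ^{2q×2p} given by B = [[Re A, −Im A], [Im A, Re A]]; that is, λ_min(AᴴA) = λ_min(BᵀB), where AᴴA is the p×p conjugate-transpose Gram matrix and BᵀB is the 2p×2p transpose Gram matrix. -/
/-! Writing `ℂⁿ` as `ℝⁿ × ℝⁿ` (real parts, imaginary parts), a complex matrix `M` becomes the real
block matrix `realify M`. This is multiplicative and turns `ᴴ` into `ᵀ`, so `BᵀB = realify (AᴴA)`;
and it intertwines `M *ᵥ v` with `realify M *ᵥ realifyVec v`, a real scalar acting the same on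
both sides, so `AᴴA` and `BᵀB` have the same real eigenvalues. -/

/-- The minimal eigenvalue of a (Hermitian) complex matrix: the smallest real number in its
spectrum. -/
noncomputable def lambdaMinC {n : Type*} [Fintype n] [DecidableEq n] (M : Matrix n n ℂ) : ℝ :=
  sInf {r : ℝ | (r : ℂ) ∈ spectrum ℂ M}

/-- The minimal eigenvalue of a (symmetric) real matrix: the smallest element of its
spectrum. -/
noncomputable def lambdaMinR {n : Type*} [Fintype n] [DecidableEq n] (M : Matrix n n ℝ) : ℝ :=
  sInf (spectrum ℝ M)

namespace Matrix

variable {l m n K : Type*}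

theorem mem_spectrum_iff_exists_mulVec_eq_smul [Fintype n] [DecidableEq n] [Field K]
    (M : Matrix n n K) (r : K) : r ∈ spectrum K M ↔ ∃ v ≠ 0, M *ᵥ v = r • v := by
  rw [← spectrum_toLin', ← Module.End.hasEigenvalue_iff_mem_spectrum,
    Module.End.hasEigenvalue_iff, Submodule.ne_bot_iff]
  simp only [Module.End.mem_eigenspace_iff, toLin'_apply, and_comm]

/-- The matrix of `M` as an `ℝ`-linear map, in coordinates listing all real parts before all
imaginary parts. -/
def realify (M : Matrix m n ℂ) : Matrix (m ⊕ m) (n ⊕ n) ℝ :=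
  fromBlocks (M.map Complex.re) (-(M.map Complex.im)) (M.map Complex.im) (M.map Complex.re)

def realifyVec (v : n → ℂ) : n ⊕ n → ℝ :=
  Sum.elim (fun i => (v i).re) (fun i => (v i).im)

theorem realify_mul [Fintype m] (M : Matrix l m ℂ) (N : Matrix m n ℂ) :
    realify (M * N) = realify M * realify N := by
  ext (i | i) (j | j) <;>
    simp [realify, mul_apply, Complex.mul_re, Complex.mul_im,
      Finset.sum_add_distrib, sub_eq_add_neg, add_comm]

theorem realify_conjTranspose (M : Matrix m n ℂ) : realify Mᴴ = (realify M)ᵀ := by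
  ext (i | i) (j | j) <;> simp [realify]

theorem realify_mulVec [Fintype n] (M : Matrix m n ℂ) (v : n → ℂ) :
    realify M *ᵥ realifyVec v = realifyVec (M *ᵥ v) := by
  ext (i | i) <;>
    simp [realify, realifyVec, mulVec, dotProduct, Complex.mul_re, Complex.mul_im,
      Finset.sum_add_distrib, sub_eq_add_neg, add_comm]

theorem realifyVec_ofReal_smul (r : ℝ) (v : n → ℂ) :
    realifyVec ((r : ℂ) • v) = r • realifyVec v := by
  ext (i | i) <;> simp [realifyVec]

theorem realifyVec_zero : realifyVec (0 : n → ℂ) = 0 := by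
  ext (i | i) <;> simp [realifyVec]

theorem realifyVec_injective : Function.Injective (realifyVec (n := n)) := fun _ _ h =>
  funext fun i => Complex.ext (congrFun h (.inl i)) (congrFun h (.inr i))

theorem realifyVec_surjective : Function.Surjective (realifyVec (n := n)) := fun w =>
  ⟨fun i => ⟨w (.inl i), w (.inr i)⟩, by ext (i | i) <;> rfl⟩

theorem ofReal_mem_spectrum_iff_mem_spectrum_realify [Fintype n] [DecidableEq n]
    (M : Matrix n n ℂ) (r : ℝ) : (r : ℂ) ∈ spectrum ℂ M ↔ r ∈ spectrum ℝ (realify M) := by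
  simp only [mem_spectrum_iff_exists_mulVec_eq_smul, realifyVec_surjective.exists,
    realify_mulVec, ← realifyVec_ofReal_smul, realifyVec_injective.eq_iff, ne_eq,
    ← realifyVec_zero]

end Matrix

/-- the minimal singular value of a complex matrix `A` equals the minimal singular
value of the real block matrix `B = [[Re A, −Im A], [Im A, Re A]]`, i.e.
`λ_min(AᴴA) = λ_min(BᵀB)`. -/
theorem stmt_3 {q p : ℕ} (A : Matrix (Fin q) (Fin p) ℂ)
    (B : Matrix (Fin q ⊕ Fin q) (Fin p ⊕ Fin p) ℝ)
    (hB : B = Matrix.fromBlocks (A.map Complex.re) (-(A.map Complex.im))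
      (A.map Complex.im) (A.map Complex.re)) :
    lambdaMinC (A.conjTranspose * A) = lambdaMinR (B.transpose * B) := by
  have hBB : B.transpose * B = Matrix.realify (A.conjTranspose * A) := by
    rw [hB, Matrix.realify_mul, Matrix.realify_conjTranspose]
    rfl
  rw [hBB, lambdaMinC, lambdaMinR]
  congr 1
  ext r
  exact Matrix.ofReal_mem_spectrum_iff_mem_spectrum_realify _ r
end

section
/- Let E be a nonzero closed subspace and Ê a closed subspace of a complex Hilbert space H. Then for any vectors f, μ, μ̂ ∈ H, ‖(f − μ̂) − Q_Ê(f − μ̂)‖ ≤ sin∠(E,Ê) · ‖f − μ‖ + ‖(f − μ) − Q_E(f − μ)‖ + ‖μ − μ̂‖. -/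
/-!
The distance to a closed subspace is `1`-Lipschitz. Moving from `f - μhat` to `g = f - μ` costs
`‖μ - μhat‖`, and moving from `g` to `Q_E g` costs the distance from `g` to `E`; finally
`Q_E g ∈ E`, so its distance to `Ehat` is at most `sin∠(E, Ehat) ‖Q_E g‖ ≤ sin∠(E, Ehat) ‖g‖`.
-/

/-- `sin∠(A,B) := sup{‖a − Q_B a‖ : a ∈ A, ‖a‖ = 1}`. -/
noncomputable def sinAngle {H : Type*} [NormedAddCommGroup H] [InnerProductSpace ℂ H]
    (A B : Submodule ℂ H) [CompleteSpace B] : ℝ :=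
  sSup ((fun a => ‖a - (Submodule.orthogonalProjectionOnto B a : H)‖) '' {a : H | a ∈ A ∧ ‖a‖ = 1})

namespace Submodule

section RCLike

variable {𝕜 E : Type*} [RCLike 𝕜] [NormedAddCommGroup E] [InnerProductSpace 𝕜 E]
  (K : Submodule 𝕜 E) [K.HasOrthogonalProjection]

theorem norm_sub_starProjection_le (x : E) : ‖x - K.starProjection x‖ ≤ ‖x‖ := by
  simpa using Kᗮ.norm_starProjection_apply_le x

theorem norm_sub_starProjection_le_add (x y : E) :
    ‖x - K.starProjection x‖ ≤ ‖y - K.starProjection y‖ + ‖x - y‖ := by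
  simp only [← starProjection_orthogonal_val]
  calc ‖Kᗮ.starProjection x‖
      ≤ ‖Kᗮ.starProjection y‖ + ‖Kᗮ.starProjection x - Kᗮ.starProjection y‖ :=
        norm_le_norm_add_norm_sub' _ _
    _ ≤ ‖Kᗮ.starProjection y‖ + ‖x - y‖ := by
        rw [← map_sub]
        gcongr
        exact Kᗮ.norm_starProjection_apply_le _

end RCLike

end Submodule

section SinAngle

variable {H : Type*} [NormedAddCommGroup H] [InnerProductSpace ℂ H]
  (A B : Submodule ℂ H) [CompleteSpace B]

theorem sinAngle_nonneg : 0 ≤ sinAngle A B :=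
  Real.sSup_nonneg <| by rintro _ ⟨a, -, rfl⟩; exact norm_nonneg _

theorem norm_sub_starProjection_le_sinAngle_mul {a : H} (ha : a ∈ A) :
    ‖a - B.starProjection a‖ ≤ sinAngle A B * ‖a‖ := by
  rcases eq_or_ne a 0 with rfl | ha0
  · simp
  have hbdd : BddAbove ((fun a => ‖a - (B.orthogonalProjectionOnto a : H)‖) ''
      {a : H | a ∈ A ∧ ‖a‖ = 1}) := by
    refine ⟨1, ?_⟩
    rintro _ ⟨u, ⟨-, hu⟩, rfl⟩
    simpa [hu] using B.norm_sub_starProjection_le u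
  have hnorm : ‖a‖ ≠ 0 := norm_ne_zero_iff.mpr ha0
  set u : H := ((‖a‖⁻¹ : ℝ) : ℂ) • a
  have hu : ‖u‖ = 1 := by simp [u, norm_smul, hnorm]
  have hau : a = ((‖a‖ : ℝ) : ℂ) • u := by simp [u, smul_smul, hnorm]
  have hle : ‖u - B.starProjection u‖ ≤ sinAngle A B :=
    le_csSup hbdd ⟨u, ⟨A.smul_mem _ ha, hu⟩, rfl⟩
  calc ‖a - B.starProjection a‖ = ‖a‖ * ‖u - B.starProjection u‖ := by
        conv_lhs => rw [hau]
        rw [map_smul, ← smul_sub, norm_smul]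
        simp
    _ ≤ sinAngle A B * ‖a‖ := by rw [mul_comm]; gcongr

end SinAngle

theorem stmt_7_general {H : Type*} [NormedAddCommGroup H] [InnerProductSpace ℂ H]
    (E Ehat : Submodule ℂ H) [CompleteSpace E] [CompleteSpace Ehat]
    (f μ μhat : H) :
    ‖(f - μhat) - (Submodule.orthogonalProjectionOnto Ehat (f - μhat) : H)‖ ≤
      sinAngle E Ehat * ‖f - μ‖ +
        ‖(f - μ) - (Submodule.orthogonalProjectionOnto E (f - μ) : H)‖ + ‖μ - μhat‖ := by
  simp only [← Submodule.starProjection_apply]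
  set g := f - μ
  have hshift : ‖(f - μhat) - g‖ = ‖μ - μhat‖ := by congr 1; simp only [g]; abel
  calc ‖(f - μhat) - Ehat.starProjection (f - μhat)‖
      ≤ ‖g - Ehat.starProjection g‖ + ‖μ - μhat‖ :=
        hshift ▸ Ehat.norm_sub_starProjection_le_add _ _
    _ ≤ ‖E.starProjection g - Ehat.starProjection (E.starProjection g)‖
          + ‖g - E.starProjection g‖ + ‖μ - μhat‖ := by
        gcongr
        exact Ehat.norm_sub_starProjection_le_add _ _
    _ ≤ sinAngle E Ehat * ‖g‖ + ‖g - E.starProjection g‖ + ‖μ - μhat‖ := by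
        gcongr
        refine (norm_sub_starProjection_le_sinAngle_mul E Ehat (E.starProjection_apply_mem g)).trans ?_
        gcongr
        · exact sinAngle_nonneg E Ehat
        · exact E.norm_starProjection_apply_le g

/-- `‖(f − μ̂) − Q_Ê(f − μ̂)‖ ≤ sin∠(E,Ê)·‖f − μ‖ + ‖(f − μ) − Q_E(f − μ)‖ + ‖μ − μ̂‖`. -/
theorem stmt_7 {H : Type*} [NormedAddCommGroup H] [InnerProductSpace ℂ H] [CompleteSpace H]
    (E Ehat : Submodule ℂ H) [CompleteSpace E] [CompleteSpace Ehat] (hE : E ≠ ⊥)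
    (f μ μhat : H) :
    ‖(f - μhat) - (Submodule.orthogonalProjectionOnto Ehat (f - μhat) : H)‖ ≤
      sinAngle E Ehat * ‖f - μ‖ +
        ‖(f - μ) - (Submodule.orthogonalProjectionOnto E (f - μ) : H)‖ + ‖μ - μhat‖ :=
  stmt_7_general E Ehat f μ μhat
end
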